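/- Let R be a uniform CTMC with uniformisation rate q on a finite state set S, with reward structure (c, f) and time bound t ≥ 0, let 𝒫 be a partition of S, and let (c̄, f̄) be an admissible abstract reward structure for the abstraction DTMDP of (R, 𝒫). Then for every block z0 ∈ 𝒫 and every s0 ∈ z0, the CTMC value satisfies V(s0) ≤ sup over all history-dependent randomised (HR) schedulers σ of the abstraction DTMDP of V̄(σ, z0), where V̄ denotes the value in the abstraction DTMDP with rewards (c̄, f̄) and the same q and t. -/
import Mathlib


open scoped BigOperators

namespace TR

variable {S A : Type} [Fintype S] [Fintype A] [DecidableEq S] [DecidableEq A]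

/-- Poisson probabilities `φ_λ(i) = λ^i/i! · e^{−λ}`. -/
noncomputable def phi (lam : ℝ) (i : ℕ) : ℝ :=
  lam ^ i / (Nat.factorial i : ℝ) * Real.exp (-lam)

/-- `ψ_λ(i) = 1 − Σ_{j=0}^{i} φ_λ(j)`. -/
noncomputable def psi (lam : ℝ) (i : ℕ) : ℝ :=
  1 - ∑ j ∈ Finset.range (i + 1), phi lam j

/-- Action `a` is enabled in state `s`. -/
def Enabled (P : S → A → S → ℝ) (s : S) (a : A) : Prop :=
  ∑ s', P s a s' = 1

/-- `P` is the transition function of a finite DTMDP. -/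
def IsDTMDP (P : S → A → S → ℝ) : Prop :=
  (∀ s a s', 0 ≤ P s a s') ∧
  (∀ s a, (∑ s', P s a s') = 0 ∨ (∑ s', P s a s') = 1) ∧
  (∀ s, ∃ a, Enabled P s a)

/-- History-dependent randomised scheduler.  A history is encoded as a pair of
a list of (state, action) pairs (most recent first) and the current state. -/
def IsHR (P : S → A → S → ℝ) (sch : List (S × A) × S → A → ℝ) : Prop :=
  (∀ h a, 0 ≤ sch h a) ∧ (∀ h, ∑ a, sch h a = 1) ∧
  (∀ h a, 0 < sch h a → Enabled P h.2 a)

/-- Probability of the path recorded in the given history (of length `n`,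
starting at `s0`) under the HR scheduler `sch`. -/
noncomputable def hrHistProb (P : S → A → S → ℝ) (sch : List (S × A) × S → A → ℝ)
    (s0 : S) : ℕ → List (S × A) × S → ℝ
  | 0, h => if h.1 = [] ∧ h.2 = s0 then 1 else 0
  | _ + 1, ([], _) => 0
  | n + 1, ((s, a) :: rest, s') =>
      hrHistProb P sch s0 n (rest, s) * sch (rest, s) a * P s a s'

/-- Transient probability `tprob^σ(s0, n, s)`: total probability of all paths of
length `n` from `s0` ending in `s`. -/
noncomputable def hrProb (P : S → A → S → ℝ) (sch : List (S × A) × S → A → ℝ)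
    (s0 : S) (n : ℕ) (s : S) : ℝ :=
  ∑' l : List (S × A), hrHistProb P sch s0 n (l, s)

/-- Counting randomised scheduler. -/
def IsCR (P : S → A → S → ℝ) (sch : S → ℕ → A → ℝ) : Prop :=
  (∀ s n a, 0 ≤ sch s n a) ∧ (∀ s n, ∑ a, sch s n a = 1) ∧
  (∀ s n a, 0 < sch s n a → Enabled P s a)

/-- Transient distribution of a CR scheduler. -/
noncomputable def crProb (P : S → A → S → ℝ) (sch : S → ℕ → A → ℝ) (s0 : S) :
    ℕ → S → ℝ
  | 0 => fun s => if s = s0 then 1 else 0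
  | n + 1 => fun s' => ∑ s, crProb P sch s0 n s * ∑ a, sch s n a * P s a s'

/-- Counting deterministic scheduler. -/
def IsCD (P : S → A → S → ℝ) (d : S → ℕ → A) : Prop :=
  ∀ s n, Enabled P s (d s n)

/-- Transient distribution of a CD scheduler. -/
noncomputable def cdProb (P : S → A → S → ℝ) (d : S → ℕ → A) (s0 : S) :
    ℕ → S → ℝ
  | 0 => fun s => if s = s0 then 1 else 0
  | n + 1 => fun s' => ∑ s, cdProb P d s0 n s * P s (d s n) s'

/-- The value `V = Σ_i [ φ_{qt}(i)·Σ_s p_i(s)·f(s) + ψ_{qt}(i)·Σ_s p_i(s)·c(s)/q ]`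
of transient distributions `p` w.r.t. uniformisation rate `q`, time bound `t`
and rewards `(c, f)`. -/
noncomputable def value (q t : ℝ) (c f : S → ℝ) (p : ℕ → S → ℝ) : ℝ :=
  ∑' i : ℕ, (phi (q * t) i * ∑ s, p i s * f s
    + psi (q * t) i * ∑ s, p i s * (c s / q))

/-- Value-iteration vectors of a CR scheduler: `crVI … k j` is `q_{k+1-j}`,
i.e. `crVI … k 0 = q_{k+1} ≡ 0` and `crVI … k (k+1) = q_0`. -/
noncomputable def crVI (P : S → A → S → ℝ) (sch : S → ℕ → A → ℝ)
    (q t : ℝ) (c f : S → ℝ) (k : ℕ) : ℕ → S → ℝ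
  | 0 => fun _ => 0
  | j + 1 => fun s =>
      (∑ a, sch s (k - j) a * ∑ s', P s a s' * crVI P sch q t c f k j s')
      + phi (q * t) (k - j) * f s + psi (q * t) (k - j) * (c s / q)

/-- Maximising value-iteration vectors: `maxVI … k j` is `q'_{k+1-j}`,
i.e. `maxVI … k 0 = q'_{k+1} ≡ 0` and `maxVI … k (k+1) = q'_0`. -/
noncomputable def maxVI (P : S → A → S → ℝ)
    (q t : ℝ) (c f : S → ℝ) (k : ℕ) : ℕ → S → ℝ
  | 0 => fun _ => 0
  | j + 1 => fun s =>
      sSup {x : ℝ | ∃ a, Enabled P s a ∧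
        x = ∑ s', P s a s' * maxVI P q t c f k j s'}
      + phi (q * t) (k - j) * f s + psi (q * t) (k - j) * (c s / q)

/-- Maximum of a real-valued function on a finite nonempty type. -/
noncomputable def maxOf [Nonempty S] (g : S → ℝ) : ℝ :=
  Finset.univ.sup' Finset.univ_nonempty g

/-- `k` is `ε`-sufficient: `Σ_{n=0}^{k} ψ_{qt}(n) > qt − ε·q/(2·max_s c(s))`
(dropped if `max_s c(s) = 0`) and `ψ_{qt}(k)·max_s f(s) < ε/2`. -/
def EpsSufficient [Nonempty S] (q t : ℝ) (c f : S → ℝ) (ε : ℝ) (k : ℕ) : Prop :=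
  (maxOf c = 0 ∨
    (∑ n ∈ Finset.range (k + 1), psi (q * t) n) > q * t - ε * q / (2 * maxOf c)) ∧
  psi (q * t) k * maxOf f < ε / 2

/-- `n`-step transition probabilities (matrix powers) of a stochastic matrix. -/
noncomputable def matPow (P : S → S → ℝ) : ℕ → S → S → ℝ
  | 0 => fun s s' => if s = s' then 1 else 0
  | n + 1 => fun s s' => ∑ s'', matPow P n s s'' * P s'' s'

/-- `part` is a partition of the finite state set `S`. -/
def IsPartition (part : Finset (Finset S)) : Prop :=
  (∀ z ∈ part, z.Nonempty) ∧ (∀ s : S, ∃ z ∈ part, s ∈ z) ∧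
  (∀ z ∈ part, ∀ z' ∈ part, z ≠ z' → Disjoint z z')

/-- Abstraction DTMDP of a stochastic matrix w.r.t. a partition: states are
blocks, actions are concrete states, `P̄(z, s, z') = Σ_{s' ∈ z'} P(s,s')` if
`s ∈ z` and `0` otherwise. -/
noncomputable def abst (P : S → S → ℝ) (part : Finset (Finset S)) :
    {z // z ∈ part} → S → {z // z ∈ part} → ℝ :=
  fun z s z' => if s ∈ z.1 then ∑ s' ∈ z'.1, P s s' else 0


/-! ### Auxiliary lemmas -/

section Poisson

lemma phi_nonneg {lam : ℝ} (h : 0 ≤ lam) (i : ℕ) : 0 ≤ phi lam i := by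
  unfold phi; positivity

lemma summable_phi (lam : ℝ) : Summable (phi lam) :=
  (Real.summable_pow_div_factorial lam).mul_right _

lemma tsum_phi (lam : ℝ) : ∑' i, phi lam i = 1 := by
  unfold phi
  rw [tsum_mul_right]
  have h : ∑' i : ℕ, lam ^ i / (Nat.factorial i : ℝ) = Real.exp lam := by
    rw [Real.exp_eq_exp_ℝ, NormedSpace.exp_eq_tsum_div]
  rw [h, ← Real.exp_add]
  simp

lemma psi_eq_tail (lam : ℝ) (i : ℕ) : psi lam i = ∑' j, phi lam (j + (i + 1)) := by
  have h := Summable.sum_add_tsum_nat_add (f := phi lam) (i + 1) (summable_phi lam)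
  rw [tsum_phi] at h
  unfold psi
  linarith

lemma psi_nonneg {lam : ℝ} (h : 0 ≤ lam) (i : ℕ) : 0 ≤ psi lam i := by
  rw [psi_eq_tail]
  exact tsum_nonneg fun j => phi_nonneg h _

lemma phi_shift_le {lam : ℝ} (h : 0 ≤ lam) (i j : ℕ) :
    phi lam (j + (i + 1)) ≤ lam ^ (i + 1) / (Nat.factorial (i + 1) : ℝ) * phi lam j := by
  unfold phi
  have hfact : ((Nat.factorial (i + 1) : ℝ) * (Nat.factorial j : ℝ)) ≤
      (Nat.factorial (j + (i + 1)) : ℝ) := by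
    have hd : Nat.factorial (i + 1) * Nat.factorial j ∣ Nat.factorial (j + (i + 1)) := by
      rw [add_comm j (i + 1)]
      exact Nat.factorial_mul_factorial_dvd_factorial_add (i + 1) j
    exact_mod_cast Nat.le_of_dvd (Nat.factorial_pos _) hd
  have hexp : (0:ℝ) < Real.exp (-lam) := Real.exp_pos _
  have h1 : lam ^ (j + (i + 1)) / (Nat.factorial (j + (i + 1)) : ℝ) ≤
      lam ^ (j + (i + 1)) / ((Nat.factorial (i + 1) : ℝ) * (Nat.factorial j : ℝ)) := by
    apply div_le_div_of_nonneg_left (by positivity) (by positivity) hfact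
  calc lam ^ (j + (i + 1)) / (Nat.factorial (j + (i + 1)) : ℝ) * Real.exp (-lam)
      ≤ lam ^ (j + (i + 1)) / ((Nat.factorial (i + 1) : ℝ) * (Nat.factorial j : ℝ)) *
        Real.exp (-lam) := by
        exact mul_le_mul_of_nonneg_right h1 hexp.le
    _ = lam ^ (i + 1) / (Nat.factorial (i + 1) : ℝ) *
        (lam ^ j / (Nat.factorial j : ℝ) * Real.exp (-lam)) := by
        rw [pow_add]
        field_simp

lemma psi_le {lam : ℝ} (h : 0 ≤ lam) (i : ℕ) :
    psi lam i ≤ lam ^ (i + 1) / (Nat.factorial (i + 1) : ℝ) := by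
  rw [psi_eq_tail]
  have hsum1 : Summable fun j => phi lam (j + (i + 1)) :=
    (summable_phi lam).comp_injective (add_left_injective (i + 1))
  have hsum2 : Summable fun j => lam ^ (i + 1) / (Nat.factorial (i + 1) : ℝ) * phi lam j :=
    (summable_phi lam).mul_left _
  calc ∑' j, phi lam (j + (i + 1))
      ≤ ∑' j, lam ^ (i + 1) / (Nat.factorial (i + 1) : ℝ) * phi lam j :=
        Summable.tsum_le_tsum (fun j => phi_shift_le h i j) hsum1 hsum2
    _ = lam ^ (i + 1) / (Nat.factorial (i + 1) : ℝ) * ∑' j, phi lam j := tsum_mul_left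
    _ = lam ^ (i + 1) / (Nat.factorial (i + 1) : ℝ) := by rw [tsum_phi, mul_one]

lemma summable_psi {lam : ℝ} (h : 0 ≤ lam) : Summable (psi lam) := by
  refine Summable.of_nonneg_of_le (psi_nonneg h) (psi_le h) ?_
  exact (summable_nat_add_iff 1).2 (Real.summable_pow_div_factorial lam)

end Poisson

section MatPow

lemma matPow_nonneg {P : S → S → ℝ} (hP : ∀ s s', 0 ≤ P s s') (n : ℕ) (s s' : S) :
    0 ≤ matPow P n s s' := by
  induction n generalizing s' with
  | zero => simp only [matPow]; split <;> norm_num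
  | succ n ih =>
    simp only [matPow]
    exact Finset.sum_nonneg fun u _ => mul_nonneg (ih u) (hP u s')

lemma matPow_rowsum {P : S → S → ℝ} (hrow : ∀ s, ∑ s', P s s' = 1) (n : ℕ) (s : S) :
    ∑ s', matPow P n s s' = 1 := by
  induction n with
  | zero => simp [matPow]
  | succ n ih =>
    simp only [matPow]
    rw [Finset.sum_comm]
    calc ∑ u, ∑ s', matPow P n s u * P u s'
        = ∑ u, matPow P n s u * ∑ s', P u s' := by
          simp [Finset.mul_sum]
      _ = 1 := by simp [hrow, ih]

end MatPow

section Lists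

/-- Finset of all lists of a given length over a finite type. -/
def lists (α : Type) [Fintype α] [DecidableEq α] : ℕ → Finset (List α)
  | 0 => {([] : List α)}
  | n + 1 => (Finset.univ ×ˢ lists α n).image fun p => p.1 :: p.2

lemma cons_injOn (α : Type) (s : Finset (α × List α)) :
    Set.InjOn (fun p : α × List α => p.1 :: p.2) s := by
  rintro ⟨a, l⟩ - ⟨b, m⟩ - h
  simp only [List.cons.injEq] at h
  exact Prod.ext h.1 h.2

lemma mem_lists {α : Type} [Fintype α] [DecidableEq α] {l : List α} {n : ℕ} :
    l ∈ lists α n ↔ l.length = n := by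
  induction n generalizing l with
  | zero => simp [lists, List.length_eq_zero_iff]
  | succ n ih =>
    cases l with
    | nil => simp [lists]
    | cons a t =>
      simp only [lists, Finset.mem_image, Finset.mem_product, Finset.mem_univ, true_and,
        List.length_cons, add_left_inj]
      constructor
      · rintro ⟨⟨b, m⟩, hp, heq⟩
        simp only at hp
        simp only [List.cons.injEq] at heq
        rw [← heq.2]
        exact ih.mp hp
      · intro ht
        exact ⟨(a, t), ih.mpr ht, rfl⟩

end Lists

section HrGeneric

variable {P : S → A → S → ℝ} {sch : List (S × A) × S → A → ℝ} {s0 : S}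

lemma hrHistProb_nonneg (hP : ∀ s a s', 0 ≤ P s a s') (hs : ∀ h a, 0 ≤ sch h a) :
    ∀ (n : ℕ) (h : List (S × A) × S), 0 ≤ hrHistProb P sch s0 n h := by
  intro n
  induction n with
  | zero =>
    rintro ⟨l, s⟩
    simp only [hrHistProb]
    split <;> norm_num
  | succ n ih =>
    rintro ⟨(_ | ⟨⟨s, a⟩, rest⟩), s'⟩
    · simp [hrHistProb]
    · simp only [hrHistProb]
      exact mul_nonneg (mul_nonneg (ih _) (hs _ _)) (hP _ _ _)

lemma hrHistProb_eq_zero {n : ℕ} {l : List (S × A)} {s : S} (h : l.length ≠ n) :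
    hrHistProb P sch s0 n (l, s) = 0 := by
  induction n generalizing l s with
  | zero =>
    cases l with
    | nil => simp at h
    | cons a t => simp [hrHistProb]
  | succ n ih =>
    cases l with
    | nil => simp [hrHistProb]
    | cons hd tl =>
      obtain ⟨a, b⟩ := hd
      have : tl.length ≠ n := by simpa using h
      simp [hrHistProb, ih this]

lemma hrProb_eq_sum (n : ℕ) (s : S) :
    hrProb P sch s0 n s = ∑ l ∈ lists (S × A) n, hrHistProb P sch s0 n (l, s) := by
  apply tsum_eq_sum
  intro l hl
  exact hrHistProb_eq_zero (by simpa [mem_lists] using hl)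

lemma hrProb_nonneg (hP : ∀ s a s', 0 ≤ P s a s') (hs : ∀ h a, 0 ≤ sch h a)
    (n : ℕ) (s : S) : 0 ≤ hrProb P sch s0 n s := by
  rw [hrProb_eq_sum]
  exact Finset.sum_nonneg fun l _ => hrHistProb_nonneg hP hs n (l, s)

lemma sum_hrProb_succ (n : ℕ) :
    ∑ s, hrProb P sch s0 (n + 1) s =
      ∑ s' : S, ∑ rest ∈ lists (S × A) n, ∑ a : A,
        hrHistProb P sch s0 n (rest, s') * (sch (rest, s') a * ∑ s, P s' a s) := by
  simp_rw [hrProb_eq_sum]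
  rw [Finset.sum_comm]
  show ∑ l ∈ lists (S × A) (n + 1), ∑ s, hrHistProb P sch s0 (n + 1) (l, s) = _
  rw [show lists (S × A) (n + 1)
      = (Finset.univ ×ˢ lists (S × A) n).image (fun p => p.1 :: p.2) from rfl]
  rw [Finset.sum_image (cons_injOn _ _)]
  rw [Finset.sum_product]
  rw [Fintype.sum_prod_type]
  refine Finset.sum_congr rfl fun s' _ => ?_
  rw [Finset.sum_comm]
  refine Finset.sum_congr rfl fun rest _ => ?_
  refine Finset.sum_congr rfl fun a _ => ?_
  simp only [hrHistProb, Finset.mul_sum, mul_assoc]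

lemma hrProb_mass (hP : ∀ s a s', 0 ≤ P s a s') (hrow : ∀ s a, ∑ s', P s a s' ≤ 1)
    (h0 : ∀ h a, 0 ≤ sch h a) (h1 : ∀ h, ∑ a, sch h a = 1) :
    ∀ n, ∑ s, hrProb P sch s0 n s ≤ 1 := by
  intro n
  induction n with
  | zero =>
    have hone : ∀ s : S, hrProb P sch s0 0 s = if s = s0 then 1 else 0 := by
      intro s
      rw [hrProb_eq_sum]
      show ∑ l ∈ {([] : List (S × A))}, hrHistProb P sch s0 0 (l, s) = _
      rw [Finset.sum_singleton]
      simp [hrHistProb]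
    rw [Finset.sum_congr rfl fun s _ => hone s,
      Finset.sum_ite_eq' Finset.univ s0 (fun _ => (1 : ℝ))]
    simp
  | succ n ih =>
    rw [sum_hrProb_succ]
    have key : ∀ (s' : S) (rest : List (S × A)),
        (∑ a, sch (rest, s') a * ∑ s, P s' a s) ≤ 1 := by
      intro s' rest
      calc ∑ a, sch (rest, s') a * ∑ s, P s' a s
          ≤ ∑ a, sch (rest, s') a * 1 :=
            Finset.sum_le_sum fun a _ =>
              mul_le_mul_of_nonneg_left (hrow s' a) (h0 _ a)
        _ = 1 := by simp [h1]
    calc ∑ s' : S, ∑ rest ∈ lists (S × A) n, ∑ a : A,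
          hrHistProb P sch s0 n (rest, s') * (sch (rest, s') a * ∑ s, P s' a s)
        = ∑ s' : S, ∑ rest ∈ lists (S × A) n,
          hrHistProb P sch s0 n (rest, s') * ∑ a, sch (rest, s') a * ∑ s, P s' a s := by
          simp_rw [Finset.mul_sum]
      _ ≤ ∑ s' : S, ∑ rest ∈ lists (S × A) n, hrHistProb P sch s0 n (rest, s') * 1 :=
          Finset.sum_le_sum fun s' _ => Finset.sum_le_sum fun rest _ =>
            mul_le_mul_of_nonneg_left (key s' rest) (hrHistProb_nonneg hP h0 n (rest, s'))
      _ = ∑ s', hrProb P sch s0 n s' := by simp_rw [mul_one, hrProb_eq_sum]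
      _ ≤ 1 := ih

end HrGeneric

section ValueBounds

lemma sum_mul_le_sum {ι : Type} [Fintype ι] {p g : ι → ℝ} (hp : ∀ z, 0 ≤ p z)
    (hp1 : ∑ z, p z ≤ 1) (hg : ∀ z, 0 ≤ g z) : ∑ z, p z * g z ≤ ∑ z, g z := by
  refine Finset.sum_le_sum fun z _ => ?_
  have hpz : p z ≤ 1 :=
    le_trans (Finset.single_le_sum (fun i _ => hp i) (Finset.mem_univ z)) hp1
  exact mul_le_of_le_one_left (hg z) hpz

lemma value_summable {ι : Type} [Fintype ι] {q t : ℝ} (hq : 0 < q) (ht : 0 ≤ t)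
    {c f : ι → ℝ} (hc : ∀ z, 0 ≤ c z) (hf : ∀ z, 0 ≤ f z)
    {p : ℕ → ι → ℝ} (hp : ∀ i z, 0 ≤ p i z) (hp1 : ∀ i, ∑ z, p i z ≤ 1) :
    Summable (fun i => phi (q * t) i * ∑ z, p i z * f z
      + psi (q * t) i * ∑ z, p i z * (c z / q)) := by
  have hlam : 0 ≤ q * t := mul_nonneg hq.le ht
  refine Summable.of_nonneg_of_le ?_ ?_
    (((summable_phi (q * t)).mul_right (∑ z, f z)).add
      ((summable_psi hlam).mul_right (∑ z, c z / q)))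
  · intro i
    have h1 : 0 ≤ ∑ z, p i z * f z :=
      Finset.sum_nonneg fun z _ => mul_nonneg (hp i z) (hf z)
    have h2 : 0 ≤ ∑ z, p i z * (c z / q) :=
      Finset.sum_nonneg fun z _ => mul_nonneg (hp i z) (div_nonneg (hc z) hq.le)
    exact add_nonneg (mul_nonneg (phi_nonneg hlam i) h1)
      (mul_nonneg (psi_nonneg hlam i) h2)
  · intro i
    refine add_le_add ?_ ?_
    · exact mul_le_mul_of_nonneg_left
        (sum_mul_le_sum (hp i) (hp1 i) hf) (phi_nonneg hlam i)
    · exact mul_le_mul_of_nonneg_left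
        (sum_mul_le_sum (hp i) (hp1 i) (fun z => div_nonneg (hc z) hq.le))
        (psi_nonneg hlam i)

lemma value_le_bound {ι : Type} [Fintype ι] {q t : ℝ} (hq : 0 < q) (ht : 0 ≤ t)
    {c f : ι → ℝ} (hc : ∀ z, 0 ≤ c z) (hf : ∀ z, 0 ≤ f z)
    {p : ℕ → ι → ℝ} (hp : ∀ i z, 0 ≤ p i z) (hp1 : ∀ i, ∑ z, p i z ≤ 1) :
    value q t c f p ≤ ∑' i, (phi (q * t) i * ∑ z, f z + psi (q * t) i * ∑ z, c z / q) := by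
  have hlam : 0 ≤ q * t := mul_nonneg hq.le ht
  unfold value
  refine Summable.tsum_le_tsum ?_ (value_summable hq ht hc hf hp hp1)
    (((summable_phi (q * t)).mul_right (∑ z, f z)).add
      ((summable_psi hlam).mul_right (∑ z, c z / q)))
  intro i
  refine add_le_add ?_ ?_
  · exact mul_le_mul_of_nonneg_left (sum_mul_le_sum (hp i) (hp1 i) hf) (phi_nonneg hlam i)
  · exact mul_le_mul_of_nonneg_left
      (sum_mul_le_sum (hp i) (hp1 i) (fun z => div_nonneg (hc z) hq.le)) (psi_nonneg hlam i)

end ValueBounds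

section Partition

variable {part : Finset (Finset S)}

lemma block_eq_of_mem (hpart : IsPartition part) {z z' : {z // z ∈ part}} {s : S}
    (h : s ∈ z.1) (h' : s ∈ z'.1) : z = z' := by
  by_contra hne
  have hd := hpart.2.2 z.1 z.2 z'.1 z'.2 (fun he => hne (Subtype.ext he))
  exact (Finset.disjoint_left.mp hd h) h'

lemma block_mem_sum (hpart : IsPartition part) (s : S) :
    ∑ z : {z // z ∈ part}, (if s ∈ z.1 then (1 : ℝ) else 0) = 1 := by
  obtain ⟨z, hz, hs⟩ := hpart.2.1 s
  rw [Finset.sum_eq_single (⟨z, hz⟩ : {z // z ∈ part})]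
  · simp [hs]
  · rintro z' - hne
    have : s ∉ z'.1 := fun hs' => hne (block_eq_of_mem hpart hs' hs)
    simp [this]
  · intro h
    exact absurd (Finset.mem_univ _) h

lemma sum_partition (hpart : IsPartition part) (g : S → ℝ) :
    ∑ z : {z // z ∈ part}, ∑ s ∈ z.1, g s = ∑ s, g s := by
  have h1 : ∀ z : {z // z ∈ part},
      ∑ s ∈ z.1, g s = ∑ s : S, (if s ∈ z.1 then (1 : ℝ) else 0) * g s := by
    intro z
    rw [Finset.sum_congr rfl (fun s _ => by
      by_cases h : s ∈ z.1 <;> simp [h] : ∀ s ∈ Finset.univ,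
        (if s ∈ z.1 then (1 : ℝ) else 0) * g s = if s ∈ z.1 then g s else 0)]
    rw [Finset.sum_ite_mem, Finset.univ_inter]
  rw [Finset.sum_congr rfl fun z _ => h1 z, Finset.sum_comm]
  refine Finset.sum_congr rfl fun s _ => ?_
  rw [← Finset.sum_mul, block_mem_sum hpart s, one_mul]

lemma abst_nonneg {P : S → S → ℝ} (hP : ∀ s s', 0 ≤ P s s')
    (z : {z // z ∈ part}) (a : S) (z' : {z // z ∈ part}) : 0 ≤ abst P part z a z' := by
  unfold abst
  split
  · exact Finset.sum_nonneg fun s' _ => hP a s'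
  · exact le_refl 0

lemma abst_rowsum {P : S → S → ℝ} (hpart : IsPartition part)
    (hrow : ∀ s, ∑ s', P s s' = 1) (z : {z // z ∈ part}) (a : S) :
    ∑ z', abst P part z a z' = if a ∈ z.1 then (1 : ℝ) else 0 := by
  by_cases h : a ∈ z.1
  · simp only [abst, h, if_true]
    rw [sum_partition hpart (P a), hrow]
  · simp [abst, h]

lemma enabled_abst {P : S → S → ℝ} (hpart : IsPartition part)
    (hrow : ∀ s, ∑ s', P s s' = 1) {z : {z // z ∈ part}} {a : S} :
    Enabled (abst P part) z a ↔ a ∈ z.1 := by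
  unfold Enabled
  rw [abst_rowsum hpart hrow]
  by_cases h : a ∈ z.1 <;> simp [h]

end Partition

section Scheduler

variable {part : Finset (Finset S)}

/-- A chosen element of each block of a partition. -/
noncomputable def pick (hne : ∀ z ∈ part, z.Nonempty) (z : {z // z ∈ part}) : S :=
  (hne z.1 z.2).choose

lemma pick_mem (hne : ∀ z ∈ part, z.Nonempty) (z : {z // z ∈ part}) :
    pick hne z ∈ z.1 :=
  (hne z.1 z.2).choose_spec

/-- The simulating scheduler: chooses a concrete state inside the current block
with the conditional probability of the concrete chain being there. -/
noncomputable def mySch (P : S → S → ℝ) (hne : ∀ z ∈ part, z.Nonempty) (s0 : S) :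
    List ({z // z ∈ part} × S) × {z // z ∈ part} → S → ℝ
  | ([], z) => fun a =>
      if s0 ∈ z.1 then (if a = s0 then 1 else 0) else (if a = pick hne z then 1 else 0)
  | ((z', s') :: _, z) => fun a =>
      if s' ∈ z'.1 ∧ 0 < ∑ u ∈ z.1, P s' u then
        (if a ∈ z.1 then P s' a / ∑ u ∈ z.1, P s' u else 0)
      else (if a = pick hne z then 1 else 0)

lemma mySch_isHR {P : S → S → ℝ} (hP : ∀ s s', 0 ≤ P s s')
    (hrow : ∀ s, ∑ s', P s s' = 1) (hpart : IsPartition part) (s0 : S) :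
    IsHR (abst P part) (mySch P hpart.1 s0) := by
  refine ⟨?_, ?_, ?_⟩
  · rintro ⟨(_ | ⟨⟨z', s'⟩, rest⟩), z⟩ a
    · simp only [mySch]
      split_ifs <;> norm_num
    · simp only [mySch]
      split_ifs with h1 h2 h3
      · exact div_nonneg (hP s' a) (Finset.sum_nonneg fun u _ => hP s' u)
      · norm_num
      · norm_num
      · norm_num
  · rintro ⟨(_ | ⟨⟨z', s'⟩, rest⟩), z⟩
    · simp only [mySch]
      split_ifs <;> rw [Finset.sum_ite_eq' Finset.univ] <;> simp
    · simp only [mySch]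
      split_ifs with h
      · rw [Finset.sum_ite_mem, Finset.univ_inter, ← Finset.sum_div,
          div_self (ne_of_gt h.2)]
      · rw [Finset.sum_ite_eq' Finset.univ]
        simp
  · rintro ⟨(_ | ⟨⟨z', s'⟩, rest⟩), z⟩ a hpos <;>
      rw [enabled_abst hpart hrow] <;> simp only [mySch] at hpos
    · split_ifs at hpos with h1 h2 h3
      · exact h2 ▸ h1
      · exact absurd hpos (by norm_num)
      · exact h3 ▸ pick_mem hpart.1 z
      · exact absurd hpos (by norm_num)
    · split_ifs at hpos with h1 h2 h3
      · exact h2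
      · exact absurd hpos (by norm_num)
      · exact h3 ▸ pick_mem hpart.1 z
      · exact absurd hpos (by norm_num)

/-- Probability of a concrete path following the recorded history and ending in
a given state. -/
noncomputable def rho (P : S → S → ℝ) (part : Finset (Finset S)) (s0 : S) :
    ℕ → List ({z // z ∈ part} × S) → S → ℝ
  | 0, [], u => if u = s0 then 1 else 0
  | 0, _ :: _, _ => 0
  | _ + 1, [], _ => 0
  | n + 1, (z', s') :: rest, u =>
      rho P part s0 n rest s' * (if s' ∈ z'.1 then 1 else 0) * P s' u

lemma rho_nonneg {P : S → S → ℝ} (hP : ∀ s s', 0 ≤ P s s') (s0 : S) :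
    ∀ (n : ℕ) (l : List ({z // z ∈ part} × S)) (u : S), 0 ≤ rho P part s0 n l u := by
  intro n
  induction n with
  | zero =>
    rintro (_ | ⟨⟨z', s'⟩, rest⟩) u
    · simp only [rho]; split <;> norm_num
    · simp [rho]
  | succ n ih =>
    rintro (_ | ⟨⟨z', s'⟩, rest⟩) u
    · simp [rho]
    · simp only [rho]
      refine mul_nonneg (mul_nonneg (ih rest s') ?_) (hP s' u)
      split <;> norm_num

/-- Key lemma: the history probabilities of the simulating scheduler in the
abstraction are exactly the block-sums of concrete path probabilities. -/
lemma hrHistProb_mySch {P : S → S → ℝ} (hP : ∀ s s', 0 ≤ P s s')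
    (hpart : IsPartition part) (z0 : {z // z ∈ part}) (s0 : S) (hs0 : s0 ∈ z0.1) :
    ∀ (n : ℕ) (l : List ({z // z ∈ part} × S)) (z : {z // z ∈ part}),
      hrHistProb (abst P part) (mySch P hpart.1 s0) z0 n (l, z)
        = ∑ u ∈ z.1, rho P part s0 n l u := by
  intro n
  induction n with
  | zero =>
    rintro (_ | ⟨⟨z', s'⟩, rest⟩) z
    · simp only [hrHistProb, rho, true_and]
      rw [Finset.sum_ite_eq' z.1 s0 (fun _ => (1 : ℝ))]
      by_cases h : z = z0
      · subst h; simp [hs0]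
      · have hnm : s0 ∉ z.1 := fun hmem => h (block_eq_of_mem hpart hmem hs0)
        simp [h, hnm]
    · simp [hrHistProb, rho]
  | succ n ih =>
    rintro (_ | ⟨⟨z', s'⟩, rest⟩) z
    · simp [hrHistProb, rho]
    · simp only [hrHistProb, rho]
      rw [ih rest z']
      by_cases hz' : s' ∈ z'.1
      · simp only [abst, hz', if_true, mul_one]
        have hre : ∑ u ∈ z.1, rho P part s0 n rest s' * P s' u
            = rho P part s0 n rest s' * ∑ u ∈ z.1, P s' u := by
          rw [Finset.mul_sum]
        rw [hre]
        suffices hmain : (∑ v ∈ z'.1, rho P part s0 n rest v) *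
            mySch P hpart.1 s0 (rest, z') s'
              * (∑ u ∈ z.1, P s' u) = rho P part s0 n rest s' * ∑ u ∈ z.1, P s' u by
          exact hmain
        rcases rest with _ | ⟨⟨z'', s''⟩, rest2⟩
        · -- rest = []
          rcases n with _ | m
          · simp only [rho]
            rw [Finset.sum_ite_eq' z'.1 s0 (fun _ => (1 : ℝ))]
            simp only [mySch]
            by_cases hs0' : s0 ∈ z'.1
            · simp [hs0']
            · have : s' ≠ s0 := fun he => hs0' (he ▸ hz')
              simp [hs0', this]
          · simp [rho]
        · -- rest = (z'', s'') :: rest2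
          rcases n with _ | m
          · simp [rho]
          · simp only [rho]
            set C : ℝ := rho P part s0 m rest2 s'' * (if s'' ∈ z''.1 then (1:ℝ) else 0)
              with hC
            have hsum : ∑ v ∈ z'.1, C * P s'' v = C * ∑ v ∈ z'.1, P s'' v := by
              rw [Finset.mul_sum]
            rw [hsum]
            simp only [mySch]
            by_cases h1 : s'' ∈ z''.1
            · by_cases h2 : 0 < ∑ u ∈ z'.1, P s'' u
              · rw [if_pos ⟨h1, h2⟩, if_pos hz']
                field_simp
              · have hD0 : ∑ u ∈ z'.1, P s'' u = 0 :=
                  le_antisymm (not_lt.mp h2) (Finset.sum_nonneg fun u _ => hP s'' u)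
                have hP0 : P s'' s' = 0 :=
                  (Finset.sum_eq_zero_iff_of_nonneg (fun u _ => hP s'' u)).mp hD0 s' hz'
                rw [hD0, hP0]
                ring
            · have hC0 : C = 0 := by simp [hC, h1]
              rw [hC0]
              ring
      · simp only [abst, hz', if_false, mul_zero]
        symm
        refine Finset.sum_eq_zero fun u _ => by simp [hz']

lemma rho_sum {P : S → S → ℝ} (hpart : IsPartition part) (s0 : S) :
    ∀ (n : ℕ) (u : S),
      ∑ l ∈ lists ({z // z ∈ part} × S) n, rho P part s0 n l u = matPow P n s0 u := by
  intro n
  induction n with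
  | zero =>
    intro u
    simp [lists, rho, matPow, eq_comm]
  | succ n ih =>
    intro u
    rw [show lists ({z // z ∈ part} × S) (n + 1)
        = (Finset.univ ×ˢ lists ({z // z ∈ part} × S) n).image (fun p => p.1 :: p.2)
      from rfl]
    rw [Finset.sum_image (cons_injOn _ _), Finset.sum_product, Fintype.sum_prod_type]
    have hm : matPow P (n + 1) s0 u = ∑ s' : S, matPow P n s0 s' * P s' u := rfl
    rw [hm, Finset.sum_comm]
    refine Finset.sum_congr rfl fun s' _ => ?_
    rw [← ih s']
    rw [Finset.sum_comm, Finset.sum_mul]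
    refine Finset.sum_congr rfl fun rest _ => ?_
    have hb := block_mem_sum hpart s'
    calc ∑ z' : {z // z ∈ part}, rho P part s0 (n + 1) ((z', s') :: rest) u
        = ∑ z' : {z // z ∈ part}, (if s' ∈ z'.1 then (1:ℝ) else 0) *
            (rho P part s0 n rest s' * P s' u) := by
          refine Finset.sum_congr rfl fun z' _ => ?_
          simp only [rho]
          ring
      _ = (∑ z' : {z // z ∈ part}, if s' ∈ z'.1 then (1:ℝ) else 0) *
            (rho P part s0 n rest s' * P s' u) := by
          rw [Finset.sum_mul]
      _ = rho P part s0 n rest s' * P s' u := by rw [hb, one_mul]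

lemma hrProb_mySch {P : S → S → ℝ} (hP : ∀ s s', 0 ≤ P s s')
    (hpart : IsPartition part) (z0 : {z // z ∈ part}) (s0 : S) (hs0 : s0 ∈ z0.1) :
    hrProb (abst P part) (mySch P hpart.1 s0) z0
      = fun n z => ∑ s ∈ z.1, matPow P n s0 s := by
  funext n z
  rw [hrProb_eq_sum]
  calc ∑ l ∈ lists ({z // z ∈ part} × S) n,
        hrHistProb (abst P part) (mySch P hpart.1 s0) z0 n (l, z)
      = ∑ l ∈ lists ({z // z ∈ part} × S) n, ∑ u ∈ z.1, rho P part s0 n l u :=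
        Finset.sum_congr rfl fun l _ => hrHistProb_mySch hP hpart z0 s0 hs0 n l z
    _ = ∑ u ∈ z.1, ∑ l ∈ lists ({z // z ∈ part} × S) n, rho P part s0 n l u :=
        Finset.sum_comm
    _ = ∑ u ∈ z.1, matPow P n s0 u :=
        Finset.sum_congr rfl fun u _ => rho_sum hpart s0 n u

end Scheduler

section Compare

variable {part : Finset (Finset S)}

lemma value_compare {q t : ℝ} (hq : 0 < q) (ht : 0 ≤ t)
    (hpart : IsPartition part)
    {c f : S → ℝ} (hc : ∀ s, 0 ≤ c s) (hf : ∀ s, 0 ≤ f s)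
    {cb fb : {z // z ∈ part} → ℝ}
    (hcb : ∀ z : {z // z ∈ part}, ∀ s ∈ z.1, c s ≤ cb z)
    (hfb : ∀ z : {z // z ∈ part}, ∀ s ∈ z.1, f s ≤ fb z)
    {p : ℕ → S → ℝ} (hp : ∀ i s, 0 ≤ p i s) (hp1 : ∀ i, ∑ s, p i s ≤ 1) :
    value q t c f p ≤ value q t cb fb (fun i z => ∑ s ∈ z.1, p i s) := by
  have hlam : 0 ≤ q * t := mul_nonneg hq.le ht
  have hcb0 : ∀ z : {z // z ∈ part}, 0 ≤ cb z := fun z => by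
    obtain ⟨s, hs⟩ := hpart.1 z.1 z.2
    exact le_trans (hc s) (hcb z s hs)
  have hfb0 : ∀ z : {z // z ∈ part}, 0 ≤ fb z := fun z => by
    obtain ⟨s, hs⟩ := hpart.1 z.1 z.2
    exact le_trans (hf s) (hfb z s hs)
  have hpz : ∀ i (z : {z // z ∈ part}), 0 ≤ ∑ s ∈ z.1, p i s := fun i z =>
    Finset.sum_nonneg fun s _ => hp i s
  have hpz1 : ∀ i, ∑ z : {z // z ∈ part}, ∑ s ∈ z.1, p i s ≤ 1 := fun i => by
    rw [sum_partition hpart]; exact hp1 i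
  unfold value
  refine Summable.tsum_le_tsum ?_ (value_summable hq ht hc hf hp hp1)
    (value_summable hq ht hcb0 hfb0 hpz hpz1)
  intro i
  have h1 : ∑ s, p i s * f s ≤ ∑ z : {z // z ∈ part}, (∑ s ∈ z.1, p i s) * fb z := by
    rw [← sum_partition hpart (fun s => p i s * f s)]
    refine Finset.sum_le_sum fun z _ => ?_
    rw [Finset.sum_mul]
    exact Finset.sum_le_sum fun s hs =>
      mul_le_mul_of_nonneg_left (hfb z s hs) (hp i s)
  have h2 : ∑ s, p i s * (c s / q) ≤
      ∑ z : {z // z ∈ part}, (∑ s ∈ z.1, p i s) * (cb z / q) := by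
    rw [← sum_partition hpart (fun s => p i s * (c s / q))]
    refine Finset.sum_le_sum fun z _ => ?_
    rw [Finset.sum_mul]
    refine Finset.sum_le_sum fun s hs => mul_le_mul_of_nonneg_left ?_ (hp i s)
    exact (div_le_div_iff_of_pos_right hq).mpr (hcb z s hs)
  exact add_le_add (mul_le_mul_of_nonneg_left h1 (phi_nonneg hlam i))
    (mul_le_mul_of_nonneg_left h2 (psi_nonneg hlam i))

end Compare

/-- the value of a uniform CTMC is bounded above by the supremum,
over HR schedulers, of the value of the abstraction DTMDP with any admissible
abstract reward structure. -/
theorem stmt2 {S : Type} [Fintype S] [DecidableEq S]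
    (q : ℝ) (hq : 0 < q) (R : S → S → ℝ)
    (hR : ∀ s s', 0 ≤ R s s') (hrow : ∀ s, ∑ s', R s s' = q)
    (t : ℝ) (ht : 0 ≤ t)
    (c f : S → ℝ) (hc : ∀ s, 0 ≤ c s) (hf : ∀ s, 0 ≤ f s)
    (part : Finset (Finset S)) (hpart : IsPartition part)
    (cb fb : {z // z ∈ part} → ℝ)
    (hcb : ∀ z : {z // z ∈ part}, ∀ s ∈ z.1, c s ≤ cb z)
    (hfb : ∀ z : {z // z ∈ part}, ∀ s ∈ z.1, f s ≤ fb z) :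
    ∀ z0 : {z // z ∈ part}, ∀ s0 ∈ z0.1,
      value q t c f (fun i s => matPow (fun s s' => R s s' / q) i s0 s) ≤
        ⨆ sch : {sch : List ({z // z ∈ part} × S) × {z // z ∈ part} → S → ℝ //
            IsHR (abst (fun s s' => R s s' / q) part) sch},
          value q t cb fb (hrProb (abst (fun s s' => R s s' / q) part) sch.1 z0) := by
  intro z0 s0 hs0
  set P : S → S → ℝ := fun s s' => R s s' / q with hPdef
  have hPnn : ∀ s s', 0 ≤ P s s' := fun s s' => div_nonneg (hR s s') hq.le
  have hProw : ∀ s, ∑ s', P s s' = 1 := fun s => by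
    rw [show (∑ s', P s s') = (∑ s', R s s') / q from (Finset.sum_div _ _ _).symm,
      hrow, div_self hq.ne']
  have hHR := mySch_isHR hPnn hProw hpart s0
  have hform := hrProb_mySch hPnn hpart z0 s0 hs0
  have hpnn : ∀ (i : ℕ) (s : S), 0 ≤ matPow P i s0 s := fun i s =>
    matPow_nonneg hPnn i s0 s
  have hp1 : ∀ i, ∑ s, matPow P i s0 s ≤ 1 := fun i =>
    le_of_eq (matPow_rowsum hProw i s0)
  have hcb0 : ∀ z : {z // z ∈ part}, 0 ≤ cb z := fun z => by
    obtain ⟨s, hs⟩ := hpart.1 z.1 z.2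
    exact le_trans (hc s) (hcb z s hs)
  have hfb0 : ∀ z : {z // z ∈ part}, 0 ≤ fb z := fun z => by
    obtain ⟨s, hs⟩ := hpart.1 z.1 z.2
    exact le_trans (hf s) (hfb z s hs)
  have habstnn : ∀ (z : {z // z ∈ part}) (a : S) (z' : {z // z ∈ part}),
      0 ≤ abst P part z a z' := abst_nonneg hPnn
  have habstrow : ∀ (z : {z // z ∈ part}) (a : S),
      ∑ z', abst P part z a z' ≤ 1 := fun z a => by
    rw [abst_rowsum hpart hProw]
    split <;> norm_num
  have hbdd : BddAbove (Set.range
      fun sch : {sch : List ({z // z ∈ part} × S) × {z // z ∈ part} → S → ℝ //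
          IsHR (abst P part) sch} =>
        value q t cb fb (hrProb (abst P part) sch.1 z0)) := by
    refine ⟨∑' i, (phi (q * t) i * ∑ z : {z // z ∈ part}, fb z
      + psi (q * t) i * ∑ z : {z // z ∈ part}, cb z / q), ?_⟩
    rintro x ⟨sch, rfl⟩
    refine value_le_bound hq ht hcb0 hfb0 ?_ ?_
    · intro i z
      exact hrProb_nonneg habstnn sch.2.1 i z
    · intro i
      exact hrProb_mass habstnn habstrow sch.2.1 sch.2.2.1 i
  calc value q t c f (fun i s => matPow P i s0 s)
      ≤ value q t cb fb (fun i z => ∑ s ∈ z.1, matPow P i s0 s) :=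
        value_compare hq ht hpart hc hf hcb hfb hpnn hp1
    _ = value q t cb fb (hrProb (abst P part) (mySch P hpart.1 s0) z0) := by
        rw [hform]
    _ ≤ ⨆ sch : {sch : List ({z // z ∈ part} × S) × {z // z ∈ part} → S → ℝ //
          IsHR (abst P part) sch},
          value q t cb fb (hrProb (abst P part) sch.1 z0) :=
        le_ciSup hbdd ⟨mySch P hpart.1 s0, hHR⟩

end TR
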